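/- Let f : ℝ^N → ℝ be bounded and measurable, n ∈ ℕ with n ≥ 1, σ > 0, and let {W_k}_{k ∈ ℤ^N} be an independent family of standard Gaussian random variables on a probability space (Ω, P). Then for every x ∈ ℝ^N the stochastic Kantorovich operator K_n^W(f, x) is P-integrable and its expectation equals the deterministic Kantorovich operator: 𝔼[K_n^W(f, x)] = ∑_{k ∈ ℤ^N} (n^N ∫_{∏_{i=1}^N [k_i/n, (k_i+1)/n]} f(t) dt) · Z(nx − k). -/

import Mathlib

open MeasureTheory ProbabilityTheory

/-- Deformed activation function `g_{q,λ}(x) = (e^{λx} − q e^{−λx})/(e^{λx} + q e^{−λx})`. -/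
noncomputable def gq (q lam x : ℝ) : ℝ :=
  (Real.exp (lam * x) - q * Real.exp (-(lam * x))) /
    (Real.exp (lam * x) + q * Real.exp (-(lam * x)))

/-- Localized kernel `M_{q,λ}(x) = (1/4)(g_{q,λ}(x+1) − g_{q,λ}(x−1))`. -/
noncomputable def Mq (q lam x : ℝ) : ℝ :=
  (gq q lam (x + 1) - gq q lam (x - 1)) / 4

/-- Symmetrized kernel `Φ(x) = (1/2)(M_{q,λ}(x) + M_{1/q,λ}(x))`. -/
noncomputable def Phi (q lam x : ℝ) : ℝ :=
  (Mq q lam x + Mq q⁻¹ lam x) / 2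

/-- Multivariate kernel `Z(x) = ∏_{i=1}^N Φ(x_i)`. -/
noncomputable def Zker (q lam : ℝ) {N : ℕ} (x : Fin N → ℝ) : ℝ :=
  ∏ i, Phi q lam (x i)

/-- `n^N` times the integral of `f` over the box `∏_{i=1}^N [kᵢ/n, (kᵢ+1)/n]`. -/
noncomputable def cellAvg {N : ℕ} (n : ℕ) (f : (Fin N → ℝ) → ℝ) (k : Fin N → ℤ) : ℝ :=
  (n : ℝ) ^ N *
    ∫ t in Set.univ.pi fun i => Set.Icc ((k i : ℝ) / n) (((k i : ℝ) + 1) / n), f t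

/-- Stochastic symmetrized Kantorovich operator
`K_n^W(f, x)(ω) = ∑_{k ∈ ℤ^N} (n^N ∫_{box k} f) (1 + σ W_k(ω)) Z(nx − k)`. -/
noncomputable def Kop (q lam : ℝ) {N : ℕ} (n : ℕ) (σ : ℝ)
    (f : (Fin N → ℝ) → ℝ) {Ω : Type*} (W : (Fin N → ℤ) → Ω → ℝ)
    (x : Fin N → ℝ) (ω : Ω) : ℝ :=
  ∑' k : Fin N → ℤ,
    cellAvg n f k * (1 + σ * W k ω) * Zker q lam (fun i => n * x i - (k i : ℝ))

/-! Each `M_{q,λ}(x) = (g_{q,λ}(x + 1) - g_{q,λ}(x - 1))/4` is a nonnegative difference of values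
of the increasing bounded function `g_{q,λ}`, so `∑ₖ M_{q,λ}(y - k)` telescopes and converges;
hence `k ↦ Z(nx - k)` is summable over `ℤ^N`, and since the cell averages are bounded by `B`, so
are the coefficients `aₖ = (n^N ∫_{box k} f) Z(nx - k)`. Every `1 + σ Wₖ` has the law `N(1, σ²)`,
so `∑ₖ 𝔼|aₖ (1 + σ Wₖ)| = (∑ₖ |aₖ|) 𝔼|1 + σ W₀| < ∞`: this gives integrability of the series and
lets expectation and sum be exchanged, and each term has expectation `aₖ`. -/

open Filter
open scoped ENNReal

lemma gq_eq_div {q : ℝ} (hq : 0 < q) (lam x : ℝ) :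
    gq q lam x = (Real.exp (lam * x) ^ 2 - q) / (Real.exp (lam * x) ^ 2 + q) := by
  have hE := Real.exp_pos (lam * x)
  rw [gq, div_eq_div_iff (by positivity) (by positivity), Real.exp_neg]
  field_simp

lemma gq_monotone {q lam : ℝ} (hq : 0 < q) (hlam : 0 < lam) : Monotone (gq q lam) := by
  intro x y hxy
  have hEx := Real.exp_pos (lam * x)
  have hExy : Real.exp (lam * x) ≤ Real.exp (lam * y) := by gcongr
  rw [gq_eq_div hq, gq_eq_div hq, div_le_div_iff₀ (by positivity) (by positivity)]
  nlinarith [mul_le_mul hExy hExy hEx.le (hEx.le.trans hExy)]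

lemma abs_gq_le_one {q : ℝ} (hq : 0 < q) (lam x : ℝ) : |gq q lam x| ≤ 1 := by
  have hE := Real.exp_pos (lam * x)
  rw [gq_eq_div hq, abs_div, abs_of_pos (by positivity : 0 < Real.exp (lam * x) ^ 2 + q),
    div_le_one (by positivity), abs_le]
  have := sq_nonneg (Real.exp (lam * x))
  constructor <;> linarith

lemma Mq_nonneg {q lam : ℝ} (hq : 0 < q) (hlam : 0 < lam) (x : ℝ) : 0 ≤ Mq q lam x := by
  have := gq_monotone hq hlam (show x - 1 ≤ x + 1 by linarith)
  rw [Mq]; linarith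

lemma Phi_nonneg {q lam : ℝ} (hq : 0 < q) (hlam : 0 < lam) (x : ℝ) : 0 ≤ Phi q lam x := by
  have := Mq_nonneg hq hlam x
  have := Mq_nonneg (inv_pos.mpr hq) hlam x
  rw [Phi]; linarith

lemma Zker_nonneg {q lam : ℝ} (hq : 0 < q) (hlam : 0 < lam) {N : ℕ} (y : Fin N → ℝ) :
    0 ≤ Zker q lam y :=
  Finset.prod_nonneg fun _ _ ↦ Phi_nonneg hq hlam _

lemma summable_sub_succ_of_antitone_nat {u : ℕ → ℝ} (hu : Antitone u) {c : ℝ}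
    (hc : ∀ k, c ≤ u k) : Summable fun k ↦ u k - u (k + 1) :=
  summable_of_sum_range_le (c := u 0 - c) (fun k ↦ sub_nonneg.2 (hu k.le_succ)) fun m ↦ by
    rw [Finset.sum_range_sub']; linarith [hc m]

lemma summable_sub_succ_of_antitone_int {u : ℤ → ℝ} (hu : Antitone u) {c : ℝ}
    (hc : ∀ k, |u k| ≤ c) : Summable fun k ↦ u k - u (k + 1) := by
  refine Summable.of_nat_of_neg_add_one ?_ ?_
  · have := summable_sub_succ_of_antitone_nat (u := fun k : ℕ ↦ u k)
      (fun a b h ↦ hu (Int.ofNat_le.2 h)) (fun k ↦ neg_le_of_abs_le (hc k))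
    simpa only [Nat.cast_succ] using this
  · have := summable_sub_succ_of_antitone_nat (u := fun k : ℕ ↦ -u (-k))
      (fun a b h ↦ neg_le_neg (hu (neg_le_neg (Int.ofNat_le.2 h))))
      (fun k ↦ neg_le_neg (le_of_abs_le (hc _)))
    refine this.congr fun k ↦ ?_
    simp only [Nat.cast_succ, neg_add_cancel_right, neg_add]
    ring

lemma summable_Mq {q lam : ℝ} (hq : 0 < q) (hlam : 0 < lam) (y : ℝ) :
    Summable fun k : ℤ ↦ Mq q lam (y - k) := by
  have hgq (c : ℝ) : Summable fun k : ℤ ↦ gq q lam (c - k) - gq q lam (c - ↑(k + 1)) :=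
    summable_sub_succ_of_antitone_int (fun a b h ↦ gq_monotone hq hlam (by gcongr))
      (fun k ↦ abs_gq_le_one hq lam _)
  refine (((hgq (y + 1)).add (hgq y)).div_const 4).congr fun k ↦ ?_
  simp only [Mq, Int.cast_add, Int.cast_one]
  ring_nf

lemma summable_Phi {q lam : ℝ} (hq : 0 < q) (hlam : 0 < lam) (y : ℝ) :
    Summable fun k : ℤ ↦ Phi q lam (y - k) :=
  ((summable_Mq hq hlam y).add (summable_Mq (inv_pos.mpr hq) hlam y)).div_const 2

lemma summable_pi_prod_of_nonneg {κ : Type*} :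
    ∀ {N : ℕ} (g : Fin N → κ → ℝ), (∀ i k, 0 ≤ g i k) → (∀ i, Summable (g i)) →
      Summable fun k : Fin N → κ ↦ ∏ i, g i (k i)
  | 0, _, _, _ => by simpa using summable_of_hasFiniteSupport (Set.toFinite _)
  | N + 1, g, h0, hs => by
    rw [← (Fin.consEquiv fun _ ↦ κ).summable_iff]
    refine ((hs 0).mul_of_nonneg (summable_pi_prod_of_nonneg (fun i ↦ g i.succ)
      (fun i ↦ h0 i.succ) fun i ↦ hs i.succ) (h0 0)
      fun k ↦ Finset.prod_nonneg fun i _ ↦ h0 i.succ (k i)).congr fun p ↦ ?_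
    simp [Fin.prod_univ_succ]

lemma summable_Zker {q lam : ℝ} (hq : 0 < q) (hlam : 0 < lam) {N : ℕ} (y : Fin N → ℝ) :
    Summable fun k : Fin N → ℤ ↦ Zker q lam fun i ↦ y i - k i :=
  summable_pi_prod_of_nonneg (fun i (m : ℤ) ↦ Phi q lam (y i - m)) (fun _ _ ↦ Phi_nonneg hq hlam _)
    fun i ↦ summable_Phi hq hlam (y i)

lemma abs_cellAvg_le {N n : ℕ} (hn : 1 ≤ n) {f : (Fin N → ℝ) → ℝ} {B : ℝ}
    (hfb : ∀ x, |f x| ≤ B) (k : Fin N → ℤ) : |cellAvg n f k| ≤ B := by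
  have hn0 : (0 : ℝ) < n := by exact_mod_cast hn
  have hlen : ∀ i, ((k i : ℝ) + 1) / n - (k i : ℝ) / n = 1 / n := fun i ↦ by ring
  have hvol : volume.real (Set.Icc (fun i ↦ (k i : ℝ) / n) fun i ↦ ((k i : ℝ) + 1) / n) =
      (1 / n : ℝ) ^ N := by
    rw [measureReal_def, Real.volume_Icc_pi_toReal fun i ↦ by gcongr; linarith]
    simp [hlen]
  have hint := norm_setIntegral_le_of_norm_le_const (μ := volume) (f := f)
    (s := Set.Icc (fun i ↦ (k i : ℝ) / n) fun i ↦ ((k i : ℝ) + 1) / n) measure_Icc_lt_top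
    fun t _ ↦ (Real.norm_eq_abs (f t)).trans_le (hfb t)
  rw [hvol, Real.norm_eq_abs] at hint
  rw [cellAvg, Set.pi_univ_Icc, abs_mul, abs_of_pos (by positivity)]
  calc (n : ℝ) ^ N * |∫ t in Set.Icc _ _, f t| ≤ (n : ℝ) ^ N * (B * (1 / n) ^ N) := by gcongr
    _ = B := by rw [mul_left_comm, ← mul_pow, mul_one_div_cancel hn0.ne', one_pow, mul_one]

section RandomSeries

variable {α ι : Type*} [MeasurableSpace α] {μ : Measure α} [Countable ι]

lemma integrable_tsum_of_summable_integral_norm {E : Type*} [NormedAddCommGroup E]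
    [CompleteSpace E] {F : ι → α → E} (hF_int : ∀ i, Integrable (F i) μ)
    (hF_sum : Summable fun i ↦ ∫ a, ‖F i a‖ ∂μ) :
    Integrable (fun a ↦ ∑' i, F i a) μ := by
  have hlin : ∫⁻ a, ∑' i, ‖F i a‖ₑ ∂μ < ∞ := by
    rw [lintegral_tsum fun i ↦ (hF_int i).1.enorm]
    simp_rw [← ofReal_integral_norm_eq_lintegral_enorm (hF_int _)]
    rw [← ENNReal.ofReal_tsum_of_nonneg (fun i ↦ integral_nonneg fun _ ↦ norm_nonneg _) hF_sum]
    exact ENNReal.ofReal_lt_top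
  refine ⟨aestronglyMeasurable_of_tendsto_ae (atTop : Filter (Finset ι))
    (fun s ↦ Finset.aestronglyMeasurable_sum s fun i _ ↦ (hF_int i).1) ?_, ?_⟩
  · filter_upwards [ae_lt_top' (AEMeasurable.tsum fun i ↦ (hF_int i).1.enorm) hlin.ne]
      with a ha
    simpa only [Finset.sum_apply, HasSum, SummationFilter.unconditional_filter] using
      (Summable.of_enorm ha.ne).hasSum
  · exact (lintegral_mono fun _ ↦ enorm_tsum_le_tsum_enorm).trans_lt hlin

lemma integrable_tsum_mul_and_integral_eq_of_map_eq {Ω : Type*} [MeasurableSpace Ω]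
    {P : Measure Ω} {ν : Measure ℝ} {X : ι → Ω → ℝ} (hXm : ∀ k, AEMeasurable (X k) P)
    (hX : ∀ k, P.map (X k) = ν) (hν : Integrable id ν) {a : ι → ℝ} (ha : Summable a) :
    Integrable (fun ω ↦ ∑' k, a k * X k ω) P ∧
      ∫ ω, ∑' k, a k * X k ω ∂P = (∑' k, a k) * ∫ y, y ∂ν := by
  have hX_int : ∀ k, Integrable (X k) P := fun k ↦
    (integrable_map_measure aestronglyMeasurable_id (hXm k)).mp (by rw [hX k]; exact hν)
  have hX_law : ∀ k (φ : ℝ → ℝ), AEStronglyMeasurable φ ν → ∫ ω, φ (X k ω) ∂P = ∫ y, φ y ∂ν :=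
    fun k φ hφ ↦ by rw [← hX k, integral_map (hXm k) (by rwa [hX k])]
  have hnorm : ∀ k, ∫ ω, ‖a k * X k ω‖ ∂P = |a k| * ∫ y, |y| ∂ν := fun k ↦ by
    simp_rw [norm_mul, Real.norm_eq_abs]
    rw [integral_const_mul, hX_law k _ continuous_abs.aestronglyMeasurable]
  have hF_int : ∀ k, Integrable (fun ω ↦ a k * X k ω) P := fun k ↦ (hX_int k).const_mul (a k)
  have hF_sum : Summable fun k ↦ ∫ ω, ‖a k * X k ω‖ ∂P := by
    simp_rw [hnorm]; exact ha.abs.mul_right _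
  refine ⟨integrable_tsum_of_summable_integral_norm hF_int hF_sum, ?_⟩
  rw [← integral_tsum_of_summable_integral_norm hF_int hF_sum, ← tsum_mul_right]
  refine tsum_congr fun k ↦ ?_
  rw [integral_const_mul, hX_law k (fun y ↦ y) aestronglyMeasurable_id]

end RandomSeries

lemma map_one_add_mul_eq_gaussianReal {Ω : Type*} [MeasurableSpace Ω] {P : Measure Ω}
    {W : Ω → ℝ} (hWm : AEMeasurable W P) (hW : P.map W = gaussianReal 0 1) (σ : ℝ) :
    P.map (fun ω ↦ 1 + σ * W ω) = gaussianReal 1 (.mk (σ ^ 2) (sq_nonneg σ)) := by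
  have : (fun ω ↦ 1 + σ * W ω) = (1 + ·) ∘ (σ * ·) ∘ W := rfl
  rw [this, ← AEMeasurable.map_map_of_aemeasurable (by fun_prop) (by fun_prop),
    ← AEMeasurable.map_map_of_aemeasurable (by fun_prop) hWm, hW, gaussianReal_map_const_mul,
    gaussianReal_map_const_add]
  congr 1
  · ring
  · exact mul_one _

theorem stmt_14_general {N : ℕ} (lam q : ℝ) (hlam : 0 < lam) (hq : 0 < q)
    (f : (Fin N → ℝ) → ℝ) (B : ℝ) (hfb : ∀ x, |f x| ≤ B)
    (n : ℕ) (hn : 1 ≤ n) (σ : ℝ)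
    {Ω : Type*} [MeasurableSpace Ω] (P : Measure Ω)
    (W : (Fin N → ℤ) → Ω → ℝ) (hWmeas : ∀ k, Measurable (W k))
    (hWgauss : ∀ k, P.map (W k) = gaussianReal 0 1)
    (x : Fin N → ℝ) :
    Integrable (Kop q lam n σ f W x) P ∧
    ∫ ω, Kop q lam n σ f W x ω ∂P =
      ∑' k : Fin N → ℤ, cellAvg n f k * Zker q lam (fun i => n * x i - (k i : ℝ)) := by
  set a : (Fin N → ℤ) → ℝ := fun k ↦ cellAvg n f k * Zker q lam fun i ↦ n * x i - k i
  have ha : Summable a :=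
    ((summable_Zker hq hlam fun i ↦ n * x i).mul_left B).of_norm_bounded fun k ↦ by
      rw [Real.norm_eq_abs, abs_mul, abs_of_nonneg (Zker_nonneg hq hlam _)]
      exact mul_le_mul_of_nonneg_right (abs_cellAvg_le hn hfb k) (Zker_nonneg hq hlam _)
  have hK : Kop q lam n σ f W x = fun ω ↦ ∑' k, a k * (1 + σ * W k ω) :=
    funext fun ω ↦ tsum_congr fun k ↦ by ring
  obtain ⟨hint, hval⟩ := integrable_tsum_mul_and_integral_eq_of_map_eq
    (fun k ↦ (((hWmeas k).const_mul σ).const_add 1).aemeasurable)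
    (fun k ↦ map_one_add_mul_eq_gaussianReal (hWmeas k).aemeasurable (hWgauss k) σ)
    ((memLp_id_gaussianReal 1).integrable le_rfl) ha
  rw [hK]
  exact ⟨hint, by rw [hval, integral_id_gaussianReal, mul_one]⟩

theorem stmt_14 {N : ℕ} (hN : 1 ≤ N) (lam q : ℝ) (hlam : 0 < lam) (hq : 0 < q)
    (f : (Fin N → ℝ) → ℝ) (hfm : Measurable f) (B : ℝ) (hfb : ∀ x, |f x| ≤ B)
    (n : ℕ) (hn : 1 ≤ n) (σ : ℝ) (hσ : 0 < σ)
    {Ω : Type*} [MeasurableSpace Ω] (P : Measure Ω) [IsProbabilityMeasure P]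
    (W : (Fin N → ℤ) → Ω → ℝ) (hWmeas : ∀ k, Measurable (W k))
    (hWindep : iIndepFun W P)
    (hWgauss : ∀ k, P.map (W k) = gaussianReal 0 1)
    (x : Fin N → ℝ) :
    Integrable (Kop q lam n σ f W x) P ∧
    ∫ ω, Kop q lam n σ f W x ω ∂P =
      ∑' k : Fin N → ℤ, cellAvg n f k * Zker q lam (fun i => n * x i - (k i : ℝ)) :=
  stmt_14_general lam q hlam hq f B hfb n hn σ P W hWmeas hWgauss x
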